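/- For every N ≥ 1 and β ∈ (0,1), the function ε_{N,β} is non-decreasing: for all integers k, k' with 0 ≤ k ≤ k' ≤ N, ε_{N,β}(k) ≤ ε_{N,β}(k'). -/

import Mathlib

/-- The polynomial (in `t`) appearing in the definition of the scenario-approach
violation function: `(β/N) · Σ_{m=k}^{N−1} C(m,k) t^{m−k} − C(N,k) t^{N−k}`. -/
noncomputable def scenPoly (N : ℕ) (β : ℝ) (k : ℕ) (t : ℝ) : ℝ :=
  (β / N) * ∑ m ∈ Finset.Ico k N, (m.choose k : ℝ) * t ^ (m - k)
    - (N.choose k : ℝ) * t ^ (N - k)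

/-!
The roots `t k` decrease in `k`; they are positive since `scenPoly N β k 0 = β / N`. Dividing by
`t ^ (N - k)` turns `scenPoly N β k t` into a polynomial in `t⁻¹` whose non-constant
coefficients are positive, so `scenPoly N β k` is positive to the left of any positive point
where it is nonnegative. On the other hand, the binomial inequality
`C(N,k) C(m,k+1) ≤ C(N,k+1) C(m,k)` for `m ≤ N` gives
`C(N,k) t · scenPoly N β (k+1) t ≤ C(N,k+1) · scenPoly N β k t` for `t ≥ 0`, so
`scenPoly N β (k+1)` is nonpositive at the root of `scenPoly N β k`, and its own root must lie
to the left.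
-/

open Finset

noncomputable def scenPolyRev (N : ℕ) (β : ℝ) (k : ℕ) (x : ℝ) : ℝ :=
  β / N * ∑ m ∈ Ico k N, (m.choose k : ℝ) * x ^ (N - m) - N.choose k

variable {N k : ℕ} {β s t u : ℝ}

lemma scenPoly_apply_zero (hk : k < N) : scenPoly N β k 0 = β / N := by
  rw [scenPoly, sum_eq_single_of_mem k (mem_Ico.2 ⟨le_rfl, hk⟩), zero_pow (by omega : N - k ≠ 0)]
  · simp
  · intro m hm hmk
    rw [zero_pow (by have := (mem_Ico.1 hm).1; omega), mul_zero]

lemma pos_of_scenPoly_eq_zero (hk : k < N) (hβ : 0 < β) (ht : 0 ≤ t)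
    (h : scenPoly N β k t = 0) : 0 < t := by
  refine ht.lt_of_ne fun h0 => ?_
  rw [← h0, scenPoly_apply_zero hk] at h
  exact (div_pos hβ (Nat.cast_pos.2 (by omega))).ne' h

lemma scenPoly_eq_pow_mul_scenPolyRev (hk : k ≤ N) (ht : t ≠ 0) :
    scenPoly N β k t = t ^ (N - k) * scenPolyRev N β k t⁻¹ := by
  have key : ∀ m ∈ Ico k N, t ^ (N - k) * t⁻¹ ^ (N - m) = t ^ (m - k) := by
    intro m hm
    obtain ⟨hkm, hmN⟩ := mem_Ico.1 hm
    rw [inv_pow, ← pow_sub₀ _ ht (by omega)]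
    congr 1
    omega
  have hsum : ∑ m ∈ Ico k N, (m.choose k : ℝ) * t ^ (m - k)
      = t ^ (N - k) * ∑ m ∈ Ico k N, (m.choose k : ℝ) * t⁻¹ ^ (N - m) := by
    rw [mul_sum]
    exact sum_congr rfl fun m hm => by rw [mul_left_comm, key m hm]
  rw [scenPoly, scenPolyRev, hsum]
  ring

lemma strictMonoOn_scenPolyRev (hk : k < N) (hβ : 0 < β) :
    StrictMonoOn (scenPolyRev N β k) (Set.Ici 0) := by
  intro x hx y _ hxy
  have hβN : 0 < β / N := div_pos hβ (Nat.cast_pos.2 (by omega))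
  refine sub_lt_sub_right (mul_lt_mul_of_pos_left (sum_lt_sum (fun m _ => ?_) ?_) hβN) _
  · exact mul_le_mul_of_nonneg_left (pow_le_pow_left₀ hx hxy.le _) (Nat.cast_nonneg _)
  · refine ⟨k, mem_Ico.2 ⟨le_rfl, hk⟩, ?_⟩
    simpa using pow_lt_pow_left₀ hxy hx (by omega)

lemma scenPoly_pos_of_lt (hk : k < N) (hβ : 0 < β) (hs : 0 < s) (hsu : s < u)
    (hu : 0 ≤ scenPoly N β k u) : 0 < scenPoly N β k s := by
  have hu0 : 0 < u := hs.trans hsu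
  rw [scenPoly_eq_pow_mul_scenPolyRev hk.le hu0.ne'] at hu
  rw [scenPoly_eq_pow_mul_scenPolyRev hk.le hs.ne']
  have hrev : 0 ≤ scenPolyRev N β k u⁻¹ := (mul_nonneg_iff_of_pos_left (pow_pos hu0 _)).1 hu
  refine mul_pos (pow_pos hs _) (hrev.trans_lt ?_)
  exact strictMonoOn_scenPolyRev hk hβ (inv_pos.2 hu0).le (inv_pos.2 hs).le
    ((inv_lt_inv₀ hu0 hs).2 hsu)

lemma choose_mul_choose_succ_le {n m : ℕ} (k : ℕ) (hmn : m ≤ n) :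
    n.choose k * m.choose (k + 1) ≤ n.choose (k + 1) * m.choose k := by
  refine Nat.le_of_mul_le_mul_right ?_ k.succ_pos
  calc n.choose k * m.choose (k + 1) * (k + 1) = n.choose k * m.choose k * (m - k) := by
        rw [mul_assoc, Nat.choose_succ_right_eq, mul_assoc]
    _ ≤ n.choose k * m.choose k * (n - k) := by gcongr
    _ = n.choose (k + 1) * m.choose k * (k + 1) := by
        rw [mul_right_comm _ _ (k + 1), Nat.choose_succ_right_eq]
        ring

lemma choose_mul_mul_scenPoly_succ_le (hk : k < N) (hβ : 0 ≤ β) (ht : 0 ≤ t) :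
    N.choose k * t * scenPoly N β (k + 1) t ≤ N.choose (k + 1) * scenPoly N β k t := by
  have hsum : N.choose k * t * ∑ m ∈ Ico (k + 1) N, (m.choose (k + 1) : ℝ) * t ^ (m - (k + 1))
      ≤ N.choose (k + 1) * ∑ m ∈ Ico k N, (m.choose k : ℝ) * t ^ (m - k) := by
    calc _ = ∑ m ∈ Ico (k + 1) N, ((N.choose k * m.choose (k + 1) : ℕ) : ℝ) * t ^ (m - k) := by
          rw [mul_sum]
          refine sum_congr rfl fun m hm => ?_
          rw [show m - k = m - (k + 1) + 1 by have := (mem_Ico.1 hm).1; omega]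
          push_cast
          ring
      _ ≤ ∑ m ∈ Ico (k + 1) N, ((N.choose (k + 1) * m.choose k : ℕ) : ℝ) * t ^ (m - k) := by
          refine sum_le_sum fun m hm => mul_le_mul_of_nonneg_right ?_ (by positivity)
          exact_mod_cast choose_mul_choose_succ_le k (mem_Ico.1 hm).2.le
      _ ≤ ∑ m ∈ Ico k N, ((N.choose (k + 1) * m.choose k : ℕ) : ℝ) * t ^ (m - k) :=
          sum_le_sum_of_subset_of_nonneg (Ico_subset_Ico_left k.le_succ)
            fun _ _ _ => by positivity
      _ = _ := by
          rw [mul_sum]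
          push_cast
          simp only [mul_assoc]
  have hpow : t * t ^ (N - (k + 1)) = t ^ (N - k) := by
    rw [← pow_succ']
    congr 1
    omega
  simp only [scenPoly]
  linear_combination (β / N) * hsum - (N.choose k * N.choose (k + 1) : ℝ) * hpow

lemma scenPoly_succ_nonpos (hk : k < N) (hβ : 0 ≤ β) (ht : 0 < t)
    (h : scenPoly N β k t = 0) : scenPoly N β (k + 1) t ≤ 0 := by
  have key := choose_mul_mul_scenPoly_succ_le hk hβ ht.le
  rw [h, mul_zero] at key
  exact nonpos_of_mul_nonpos_right key (mul_pos (Nat.cast_pos.2 (Nat.choose_pos hk.le)) ht)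

lemma le_of_scenPoly_eq_zero_of_scenPoly_succ_eq_zero (hk : k + 1 < N) (hβ : 0 < β)
    (hs : 0 ≤ s) (hs0 : scenPoly N β k s = 0) (hu0 : scenPoly N β (k + 1) u = 0) : u ≤ s := by
  have hs_pos := pos_of_scenPoly_eq_zero (by omega) hβ hs hs0
  by_contra! hsu
  exact (scenPoly_succ_nonpos (by omega) hβ.le hs_pos hs0).not_gt
    (scenPoly_pos_of_lt hk hβ hs_pos hsu hu0.ge)

theorem stmt_1_general (N : ℕ) (β : ℝ) (hβ : β ∈ Set.Ioo (0 : ℝ) 1)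
    (t : ℕ → ℝ)
    (ht : ∀ k < N, t k ∈ Set.Icc (0 : ℝ) 1 ∧ scenPoly N β k (t k) = 0)
    (eps : ℕ → ℝ)
    (hepsN : eps N = 1)
    (heps : ∀ k < N, eps k = 1 - t k) :
    ∀ k k' : ℕ, k ≤ k' → k' ≤ N → eps k ≤ eps k' := by
  have step : ∀ j < N, eps j ≤ eps (j + 1) := by
    intro j hj
    rw [heps j hj]
    rcases (show j + 1 ≤ N from hj).eq_or_lt with hjN | hjN
    · rw [hjN, hepsN]
      linarith [(ht j hj).1.1]
    · rw [heps _ hjN]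
      linarith [le_of_scenPoly_eq_zero_of_scenPoly_succ_eq_zero hjN hβ.1 (ht j hj).1.1
        (ht j hj).2 (ht _ hjN).2]
  intro k k' hkk' hk'N
  exact monotoneOn_of_le_add_one Set.ordConnected_Iic (fun j _ _ hj => step j hj)
    (Set.mem_Iic.2 (hkk'.trans hk'N)) (Set.mem_Iic.2 hk'N) hkk'

/-- For every `N ≥ 1` and `β ∈ (0,1)`, the scenario-approach violation function
`ε_{N,β}` (defined by `ε_{N,β}(N) = 1` and `ε_{N,β}(k) = 1 − t(k)` for `k < N`,
where `t(k)` is the unique solution in `[0,1]` of the polynomial equation) is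
non-decreasing on `{0,1,…,N}`. -/
theorem stmt_1 (N : ℕ) (hN : 1 ≤ N) (β : ℝ) (hβ : β ∈ Set.Ioo (0 : ℝ) 1)
    (t : ℕ → ℝ)
    (ht : ∀ k < N, t k ∈ Set.Icc (0 : ℝ) 1 ∧ scenPoly N β k (t k) = 0)
    (eps : ℕ → ℝ)
    (hepsN : eps N = 1)
    (heps : ∀ k < N, eps k = 1 - t k) :
    ∀ k k' : ℕ, k ≤ k' → k' ≤ N → eps k ≤ eps k' :=
  stmt_1_general N β hβ t ht eps hepsN heps
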